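/- arXiv:1907.08812 — 2 statements merged into one kernel-verified Lean document; each statement's English description precedes it below -/
import Mathlib

section
/- Let s⃗ = (s₁,…,s_d) ∈ (0,∞)^d satisfy Σ_{j=1}^d 1/s_j < 2. If f ∈ H^{s⃗}(𝕋^d), then the Fourier coefficients of f are absolutely summable, i.e. Σ_{k∈ℤ^d} |f̂(k)| < ∞; in particular f has a continuous representative. -/
open MeasureTheory Complex Filter
open scoped ENNReal Topology

noncomputable section

/-- The fundamental domain `[-1/2, 1/2)^d` of the torus `𝕋^d = ℝ^d/ℤ^d`. -/
def Tcube (d : ℕ) : Set (Fin d → ℝ) := Set.univ.pi fun _ => Set.Ico (-(1/2) : ℝ) (1/2)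

/-- The (Lebesgue/Haar) measure of the torus `𝕋^d`, realized on the fundamental domain. -/
def μT (d : ℕ) : Measure (Fin d → ℝ) := volume.restrict (Tcube d)

/-- The Euclidean norm on `ℝ^d`. -/
def eunorm {d : ℕ} (x : Fin d → ℝ) : ℝ := Real.sqrt (∑ j, (x j) ^ 2)

/-- `ℤ^d`-periodicity: a function on `ℝ^d` represents a function on the torus `𝕋^d`. -/
def ZPeriodic {d : ℕ} (f : (Fin d → ℝ) → ℂ) : Prop :=
  ∀ (x : Fin d → ℝ) (m : Fin d → ℤ), f (x + fun j => (m j : ℝ)) = f x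

/-- The `k`-th Fourier coefficient of a function on the torus `𝕋^d`. -/
def fourierCoefT {d : ℕ} (f : (Fin d → ℝ) → ℂ) (k : Fin d → ℤ) : ℂ :=
  ∫ x in Tcube d, f x * Complex.exp (-(2 * Real.pi * Complex.I) * (∑ j, (k j : ℂ) * (x j : ℂ)))

/-- `u` is a `(2,q)`-Fourier multiplier on `𝕋^d`: there is `C > 0` such that for every
`f ∈ L²(𝕋^d)` with `u·f ∈ L²(𝕋^d)` one has `‖(widehat{u·f}(k))_k‖_{ℓ^q(ℤ^d)} ≤ C ‖f‖_{L²(𝕋^d)}`;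
equivalently, the operator `a ↦ 𝓕(u 𝓕⁻¹ a)` is bounded from `ℓ²(ℤ^d)` to `ℓ^q(ℤ^d)`. -/
def IsMultiplier (d : ℕ) (q : ℝ≥0∞) (u : (Fin d → ℝ) → ℂ) : Prop :=
  ∃ C : ℝ, 0 < C ∧ ∀ f : (Fin d → ℝ) → ℂ, MemLp f 2 (μT d) →
    MemLp (fun x => u x * f x) 2 (μT d) →
    eLpNorm (fun k : Fin d → ℤ => fourierCoefT (fun x => u x * f x) k) q
        (Measure.count : Measure (Fin d → ℤ)) ≤
      ENNReal.ofReal C * eLpNorm f 2 (μT d)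

/-- Membership in the Sobolev space `W^{s,2}(𝕋^d) = H^s(𝕋^d)`:
`f ∈ L²(𝕋^d)` and `∑_{k ∈ ℤ^d} |k|^{2s} |f̂(k)|² < ∞`. -/
def MemHs (d : ℕ) (s : ℝ) (f : (Fin d → ℝ) → ℂ) : Prop :=
  MemLp f 2 (μT d) ∧
    Summable (fun k : Fin d → ℤ =>
      eunorm (fun j => (k j : ℝ)) ^ (2 * s) * ‖fourierCoefT f k‖ ^ 2)

/-- `w` has a continuous (periodic) representative and this representative has a zero. -/
def HasZeroContRep (d : ℕ) (w : (Fin d → ℝ) → ℂ) : Prop :=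
  ∃ w₀ : (Fin d → ℝ) → ℂ, Continuous w₀ ∧ ZPeriodic w₀ ∧ w =ᵐ[μT d] w₀ ∧ ∃ x, w₀ x = 0

/-- Membership in the anisotropic Bessel potential space `H^{s⃗}(𝕋^d)`:
`f ∈ L²(𝕋^d)` and `∑_{k ∈ ℤ^d} (|k₁|^{2s₁} + ⋯ + |k_d|^{2s_d}) |f̂(k)|² < ∞`. -/
def MemHvec (d : ℕ) (sv : Fin d → ℝ) (f : (Fin d → ℝ) → ℂ) : Prop :=
  MemLp f 2 (μT d) ∧
    Summable (fun k : Fin d → ℤ =>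
      (∑ j, |(k j : ℝ)| ^ (2 * sv j)) * ‖fourierCoefT f k‖ ^ 2)

/-! With `c k = fourierCoefT f k` and `w k = ∑ j, |k j| ^ (2 * s j)`, the inequality
`2 |c| ≤ (1 + w)⁻¹ + (1 + w) |c| ^ 2` reduces `∑ |c k| < ∞` to Parseval and to
`∑ (1 + w k)⁻¹ < ∞`. Since `∑ 1 / s j < 2` one can pick `θ j > 1 / (2 s j)` with `∑ θ j ≤ 1`;
then `(1 + w k)⁻¹ ≤ ∏ j, (1 + |k j| ^ (2 s j)) ^ (-θ j)`, a product of summable sequences on `ℤ`.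
The Fourier series then converges uniformly to a continuous periodic function, and it equals `f`
almost everywhere because the characters form a Hilbert basis of `L²(𝕋^d)`. -/

lemma summable_fin_pi_prod {α : Type*} : ∀ {d : ℕ} (g : Fin d → α → ℝ), (∀ j, Summable (g j)) →
    (∀ j a, 0 ≤ g j a) → Summable fun k : Fin d → α => ∏ j, g j (k j)
  | 0, _, _, _ => Summable.of_finite
  | _ + 1, g, hg, hg0 => by
    have hprod := (hg 0).mul_of_nonneg
      (summable_fin_pi_prod (fun j => g j.succ) (fun j => hg j.succ) fun j => hg0 j.succ)
      (fun a => hg0 0 a) fun k => Finset.prod_nonneg fun j _ => hg0 j.succ _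
    refine (Fin.consEquiv fun _ => α).summable_iff.mp (hprod.congr fun p => ?_)
    simp [Fin.consEquiv, Fin.prod_univ_succ]

lemma summable_one_add_abs_rpow_rpow_neg {p θ : ℝ} (hθ : 0 ≤ θ) (hpθ : 1 < p * θ) :
    Summable fun m : ℤ => (1 + |(m : ℝ)| ^ p) ^ (-θ) := by
  refine Summable.of_norm_bounded_eventually (Real.summable_abs_int_rpow hpθ) ?_
  filter_upwards [(Set.finite_singleton (0 : ℤ)).compl_mem_cofinite] with m hm
  have hm : 0 < |(m : ℝ)| := by simpa using hm
  rw [Real.norm_of_nonneg (by positivity)]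
  calc (1 + |(m : ℝ)| ^ p) ^ (-θ) ≤ (|(m : ℝ)| ^ p) ^ (-θ) :=
        Real.rpow_le_rpow_of_nonpos (by positivity) (by linarith) (by linarith)
    _ = |(m : ℝ)| ^ (-(p * θ)) := by rw [← Real.rpow_mul hm.le, mul_neg]

lemma inv_one_add_sum_le_prod_rpow_neg {ι : Type*} [Fintype ι] {a θ : ι → ℝ}
    (ha : ∀ i, 0 ≤ a i) (hθ : ∀ i, 0 ≤ θ i) (hθ1 : ∑ i, θ i ≤ 1) :
    (1 + ∑ i, a i)⁻¹ ≤ ∏ i, (1 + a i) ^ (-θ i) := by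
  set A := 1 + ∑ i, a i
  have hA : 1 ≤ A := le_add_of_nonneg_right (Finset.sum_nonneg fun i _ => ha i)
  calc A⁻¹ = A ^ (-1 : ℝ) := (Real.rpow_neg_one A).symm
    _ ≤ A ^ (-∑ i, θ i) := Real.rpow_le_rpow_of_exponent_le hA (by linarith)
    _ = ∏ i, A ^ (-θ i) := by
        rw [← Finset.sum_neg_distrib, Real.rpow_sum_of_pos (by linarith)]
    _ ≤ ∏ i, (1 + a i) ^ (-θ i) :=
        Finset.prod_le_prod (fun i _ => by positivity) fun i _ =>
          Real.rpow_le_rpow_of_nonpos (by linarith [ha i])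
            (add_le_add_right (Finset.single_le_sum (fun j _ => ha j) (Finset.mem_univ i)) 1)
            (by linarith [hθ i])

lemma exists_forall_lt_sum_le_one {ι : Type*} [Fintype ι] {a : ι → ℝ} (ha : ∑ i, a i < 1) :
    ∃ θ : ι → ℝ, (∀ i, a i < θ i) ∧ ∑ i, θ i ≤ 1 := by
  set ε := (1 - ∑ i, a i) / (Fintype.card ι + 1)
  have hε : 0 < ε := div_pos (by linarith) (by positivity)
  have hcard : (Fintype.card ι + 1) * ε = 1 - ∑ i, a i := mul_div_cancel₀ _ (by positivity)
  refine ⟨fun i => a i + ε, fun i => by linarith, ?_⟩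
  rw [Finset.sum_add_distrib, Finset.sum_const, Finset.card_univ, nsmul_eq_mul]
  linarith

theorem summable_inv_one_add_sum_abs_rpow {d : ℕ} {s : Fin d → ℝ} (hs : ∀ j, 0 < s j)
    (hsum : ∑ j, 1 / s j < 2) :
    Summable fun k : Fin d → ℤ => (1 + ∑ j, |(k j : ℝ)| ^ (2 * s j))⁻¹ := by
  have hhalf : ∑ j, 1 / (2 * s j) < 1 := by
    simp only [one_div, mul_inv, ← Finset.mul_sum] at hsum ⊢
    linarith
  obtain ⟨θ, hθ, hθ1⟩ := exists_forall_lt_sum_le_one hhalf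
  have hθ0 : ∀ j, 0 ≤ θ j := fun j =>
    (one_div_nonneg.mpr (by linarith [hs j]) : 0 ≤ 1 / (2 * s j)).trans (hθ j).le
  have hprod : Summable fun k : Fin d → ℤ => ∏ j, (1 + |(k j : ℝ)| ^ (2 * s j)) ^ (-θ j) :=
    summable_fin_pi_prod (fun j (m : ℤ) => (1 + |(m : ℝ)| ^ (2 * s j)) ^ (-θ j))
      (fun j => summable_one_add_abs_rpow_rpow_neg (hθ0 j)
        ((div_lt_iff₀' (by linarith [hs j])).mp (hθ j)))
      fun j m => by positivity
  exact hprod.of_nonneg_of_le (fun k => by positivity)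
    fun k => inv_one_add_sum_le_prod_rpow_neg (fun j => by positivity) hθ0 hθ1

lemma summable_of_summable_mul_sq_of_summable_inv {ι : Type*} {W a : ι → ℝ} (hW : ∀ i, 0 < W i)
    (ha : ∀ i, 0 ≤ a i) (h1 : Summable fun i => W i * a i ^ 2)
    (h2 : Summable fun i => (W i)⁻¹) : Summable a := by
  refine Summable.of_nonneg_of_le ha (fun i => ?_) ((h2.add h1).div_const 2)
  have hWi := hW i
  have hsq : (W i)⁻¹ + W i * a i ^ 2 - 2 * a i = (W i)⁻¹ * (W i * a i - 1) ^ 2 := by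
    field_simp; ring
  have : 0 ≤ (W i)⁻¹ * (W i * a i - 1) ^ 2 := by positivity
  linarith

theorem summable_of_summable_sq_of_summable_anisotropic_weight_mul_sq {d : ℕ} {s : Fin d → ℝ}
    (hs : ∀ j, 0 < s j) (hsum : ∑ j, 1 / s j < 2) {c : (Fin d → ℤ) → ℝ} (hc : ∀ k, 0 ≤ c k)
    (hc2 : Summable fun k => c k ^ 2)
    (hwc2 : Summable fun k => (∑ j, |(k j : ℝ)| ^ (2 * s j)) * c k ^ 2) : Summable c :=
  summable_of_summable_mul_sq_of_summable_inv (fun k => by positivity) hc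
    ((hc2.add hwc2).congr fun k => by ring) (summable_inv_one_add_sum_abs_rpow hs hsum)

open UnitAddTorus Set

-- Mathlib's Fourier theory on `UnitAddTorus` normalises the circle by its Haar probability measure
-- through this (otherwise file-local) instance, which differs from the default `volume`.
attribute [local instance] instMeasureSpaceUnitAddCircle

local instance : IsProbabilityMeasure (volume : Measure UnitAddCircle) :=
  inferInstanceAs (IsProbabilityMeasure AddCircle.haarAddCircle)

def toTorus (d : ℕ) (x : Fin d → ℝ) : UnitAddTorus (Fin d) := fun j => (x j : UnitAddCircle)

def ofTorus (d : ℕ) (y : UnitAddTorus (Fin d)) : Fin d → ℝ :=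
  (measurableEquivPiIoc (fun _ : Fin d => -(1/2 : ℝ)) y : Fin d → ℝ)

lemma continuous_toTorus (d : ℕ) : Continuous (toTorus d) :=
  continuous_pi fun j => (AddCircle.continuous_mk' 1).comp (continuous_apply j)

lemma toTorus_add_intCast (d : ℕ) (x : Fin d → ℝ) (m : Fin d → ℤ) :
    toTorus d (x + fun j => (m j : ℝ)) = toTorus d x := by
  funext j
  simp [toTorus]

lemma toTorus_ofTorus (d : ℕ) (y : UnitAddTorus (Fin d)) : toTorus d (ofTorus d y) = y := by
  funext j
  simp [toTorus, ofTorus]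

lemma ofTorus_toTorus {d : ℕ} {x : Fin d → ℝ} (hx : ∀ j, x j ∈ Ioc (-(1/2 : ℝ)) (-(1/2) + 1)) :
    ofTorus d (toTorus d x) = x := by
  funext j
  simp [toTorus, ofTorus, AddCircle.equivIoc_coe_of_mem (hx j)]

lemma measurableEmbedding_ofTorus (d : ℕ) : MeasurableEmbedding (ofTorus d) :=
  (MeasurableEmbedding.subtype_coe (MeasurableSet.univ_pi' fun _ => measurableSet_Ioc)).comp
    (measurableEquivPiIoc _).measurableEmbedding

lemma μT_eq_restrict_Ioc (d : ℕ) :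
    μT d = volume.restrict {x : Fin d → ℝ | ∀ j, x j ∈ Ioc (-(1/2 : ℝ)) (-(1/2) + 1)} := by
  have hbox : {x : Fin d → ℝ | ∀ j, x j ∈ Ioc (-(1/2 : ℝ)) (-(1/2) + 1)} =
      univ.pi fun _ => Ioc (-(1/2 : ℝ)) (1/2) := by
    ext x; simp only [Set.mem_pi, mem_univ, true_implies, Set.mem_ofPred_eq]; norm_num
  rw [hbox, μT, Tcube, volume_pi]
  exact Measure.restrict_congr_set (Measure.ae_eq_set_pi fun _ _ => Ico_ae_eq_Ioc)

lemma measurePreserving_ofTorus (d : ℕ) : MeasurePreserving (ofTorus d) volume (μT d) := by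
  rw [μT_eq_restrict_Ioc]
  exact (measurePreserving_subtype_coe (MeasurableSet.univ_pi' fun _ => measurableSet_Ioc)).comp
    (measurePreserving_equivPiIoc _)

lemma measurePreserving_toTorus (d : ℕ) : MeasurePreserving (toTorus d) (μT d) volume := by
  refine ⟨(continuous_toTorus d).measurable, ?_⟩
  rw [← (measurePreserving_ofTorus d).map_eq,
    Measure.map_map (continuous_toTorus d).measurable (measurePreserving_ofTorus d).measurable]
  simp [Function.comp_def, toTorus_ofTorus]

lemma ae_eq_comp_ofTorus_toTorus {d : ℕ} (f : (Fin d → ℝ) → ℂ) :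
    f =ᵐ[μT d] f ∘ ofTorus d ∘ toTorus d := by
  rw [μT_eq_restrict_Ioc]
  filter_upwards [ae_restrict_mem (MeasurableSet.univ_pi' fun _ => measurableSet_Ioc)] with x hx
  simp [ofTorus_toTorus hx]

lemma mFourier_toTorus {d : ℕ} (k : Fin d → ℤ) (x : Fin d → ℝ) :
    mFourier k (toTorus d x) = exp (2 * Real.pi * I * ∑ j, (k j : ℂ) * (x j : ℂ)) := by
  rw [mFourier, ContinuousMap.coe_mk, Finset.mul_sum, Complex.exp_sum]
  refine Finset.prod_congr rfl fun j _ => ?_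
  simp only [toTorus, fourier_coe_apply]
  push_cast
  ring_nf

lemma fourierCoefT_eq_mFourierCoeff {d : ℕ} (f : (Fin d → ℝ) → ℂ) (k : Fin d → ℤ) :
    fourierCoefT f k = mFourierCoeff (f ∘ ofTorus d) k := by
  calc fourierCoefT f k = ∫ x, mFourier (-k) (toTorus d x) * f x ∂(μT d) := by
        refine setIntegral_congr_fun (MeasurableSet.univ_pi fun _ => measurableSet_Ico)
          fun x _ => ?_
        rw [mFourier_toTorus, mul_comm]
        simp only [Pi.neg_apply, Int.cast_neg, neg_mul, Finset.sum_neg_distrib, mul_neg]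
    _ = ∫ t, mFourier (-k) (toTorus d (ofTorus d t)) * f (ofTorus d t) :=
        ((measurePreserving_ofTorus d).integral_comp (measurableEmbedding_ofTorus d) _).symm
    _ = mFourierCoeff (f ∘ ofTorus d) k := by simp only [toTorus_ofTorus]; rfl

section FourierSeries

variable {ι : Type*} [Fintype ι] {F : UnitAddTorus ι → ℂ}

lemma mFourierCoeff_toLp (hF : MemLp F 2 volume) (n : ι → ℤ) :
    mFourierCoeff (hF.toLp F) n = mFourierCoeff F n :=
  integral_congr_ae (by filter_upwards [hF.coeFn_toLp] with t ht; rw [ht])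

lemma summable_sq_norm_mFourierCoeff (hF : MemLp F 2 volume) :
    Summable fun n => ‖mFourierCoeff F n‖ ^ 2 := by
  simpa only [mFourierCoeff_toLp hF] using (hasSum_sq_mFourierCoeff (hF.toLp F)).summable

lemma ae_eq_tsum_mFourier_of_summable (hF : MemLp F 2 volume)
    (hc : Summable fun n => ‖mFourierCoeff F n‖) :
    F =ᵐ[volume] ⇑(∑' n, mFourierCoeff F n • mFourier n) := by
  have hC : HasSum (fun n => mFourierCoeff F n • mFourier n)
      (∑' n, mFourierCoeff F n • mFourier n) :=
    (Summable.of_norm (by simpa only [norm_smul, mFourier_norm, mul_one] using hc)).hasSum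
  have hL2 := hasSum_mFourier_series_L2 (hF.toLp F)
  simp only [mFourierCoeff_toLp hF] at hL2
  have hLp := hL2.unique (by simpa using (ContinuousMap.toLp 2 volume ℂ).hasSum hC)
  filter_upwards [hF.coeFn_toLp, ContinuousMap.coeFn_toLp (𝕜 := ℂ) (p := 2) volume
    (∑' n, mFourierCoeff F n • mFourier n)] with t h1 h2
  rw [← h1, ← h2, hLp]

end FourierSeries

theorem anisotropic_sobolev_summable_fourier_general
    (d : ℕ) (sv : Fin d → ℝ) (hsv : ∀ j, 0 < sv j)
    (hsum : (∑ j, 1 / sv j) < 2)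
    (f : (Fin d → ℝ) → ℂ) (hf : MemHvec d sv f) :
    Summable (fun k : Fin d → ℤ => ‖fourierCoefT f k‖) ∧
    ∃ f₀ : (Fin d → ℝ) → ℂ, Continuous f₀ ∧ ZPeriodic f₀ ∧ f =ᵐ[μT d] f₀ := by
  obtain ⟨hf2, hweighted⟩ := hf
  have hF : MemLp (f ∘ ofTorus d) 2 volume :=
    hf2.comp_measurePreserving (measurePreserving_ofTorus d)
  simp only [fourierCoefT_eq_mFourierCoeff] at hweighted ⊢
  have hc : Summable fun k => ‖mFourierCoeff (f ∘ ofTorus d) k‖ :=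
    summable_of_summable_sq_of_summable_anisotropic_weight_mul_sq hsv hsum
      (fun k => norm_nonneg _) (summable_sq_norm_mFourierCoeff hF) hweighted
  refine ⟨hc, ⇑(∑' k, mFourierCoeff (f ∘ ofTorus d) k • mFourier k) ∘ toTorus d,
    (ContinuousMap.continuous _).comp (continuous_toTorus d),
    fun x m => by simp only [Function.comp_apply, toTorus_add_intCast], ?_⟩
  exact (ae_eq_comp_ofTorus_toTorus f).trans <|
    (measurePreserving_toTorus d).quasiMeasurePreserving.ae_eq_comp
      (ae_eq_tsum_mFourier_of_summable hF hc)

/-- **Lemma.**  Let `s⃗ ∈ (0,∞)^d` satisfy `∑_j 1/s_j < 2`.  If `f ∈ H^{s⃗}(𝕋^d)`, then the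
Fourier coefficients of `f` are absolutely summable; in particular `f` has a continuous
representative. -/
theorem anisotropic_sobolev_summable_fourier
    (d : ℕ) (hd : 1 ≤ d) (sv : Fin d → ℝ) (hsv : ∀ j, 0 < sv j)
    (hsum : (∑ j, 1 / sv j) < 2)
    (f : (Fin d → ℝ) → ℂ) (hper : ZPeriodic f) (hf : MemHvec d sv f) :
    Summable (fun k : Fin d → ℤ => ‖fourierCoefT f k‖) ∧
    ∃ f₀ : (Fin d → ℝ) → ℂ, Continuous f₀ ∧ ZPeriodic f₀ ∧ f =ᵐ[μT d] f₀ :=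
  anisotropic_sobolev_summable_fourier_general d sv hsv hsum f hf
end
end

section
/- Let d ≥ 2 and let S ⊂ ℝ^d be a Lebesgue measurable set with |S| > 0 and |ℝ^d ∖ S| > 0. Then there exist an index i₀ ∈ {1,…,d} and a set A ⊂ ℝ^{d−1} of positive (d−1)-dimensional Lebesgue measure such that for every x ∈ A the line L_{i₀}(x) satisfies S ∩ L_{i₀}(x) ≠ ∅ and S ∩ L_{i₀}(x) ≠ L_{i₀}(x) (i.e., the line meets both S and its complement). -/
open MeasureTheory Set Filter

/-!
If, for every axis direction, almost every line parallel to that axis lies entirely inside `S` or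
entirely outside it, then by Fubini `S` is a.e. invariant under translations along each axis,
hence under all translations. Translations act ergodically on `ℝ^d`, so `S` would be null or
conull.
-/

variable {α : Type*} {n : ℕ}

/-- The trace `s ∩ L_i(y)` of `s` on a coordinate line, parametrised by the `i`-th coordinate. -/
def lineSlice (i : Fin (n + 1)) (s : Set (Fin (n + 1) → α)) (y : Fin n → α) : Set α :=
  {t | i.insertNth t y ∈ s}

section Fubini

variable [MeasureSpace α] [SigmaFinite (volume : Measure α)]

theorem volume_eq_lintegral_volume_lineSlice (i : Fin (n + 1)) {s : Set (Fin (n + 1) → α)}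
    (hs : MeasurableSet s) : volume s = ∫⁻ y, volume (lineSlice i s y) := by
  set e := (MeasurableEquiv.piFinSuccAbove (fun _ : Fin (n + 1) ↦ α) i).symm
  rw [← (volume_preserving_piFinSuccAbove (fun _ ↦ α) i).symm.measure_preimage
    hs.nullMeasurableSet, Measure.volume_eq_prod, Measure.prod_apply_symm (e.measurable hs)]
  rfl

theorem ae_eq_of_ae_lineSlice_ae_eq (i : Fin (n + 1)) {s s' : Set (Fin (n + 1) → α)}
    (hs : MeasurableSet s) (hs' : MeasurableSet s')
    (h : ∀ᵐ y, lineSlice i s y =ᵐ[volume] lineSlice i s' y) : s =ᵐ[volume] s' := by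
  rw [← measure_symmDiff_eq_zero_iff, volume_eq_lintegral_volume_lineSlice i (hs.symmDiff hs')]
  exact (lintegral_congr_ae (h.mono fun y hy ↦ measure_symmDiff_eq_zero_iff.2 hy)).trans
    lintegral_zero

end Fubini

theorem lineSlice_preimage_single_add [AddZeroClass α] (i : Fin (n + 1))
    (s : Set (Fin (n + 1) → α)) (t : α) (y : Fin n → α) :
    lineSlice i ((Pi.single i t + ·) ⁻¹' s) y = (t + ·) ⁻¹' lineSlice i s y := by
  ext u
  simp only [lineSlice, mem_ofPred_eq, mem_preimage]
  rw [← Fin.insertNth_zero_right, ← Fin.insertNth_add, zero_add]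

section Translation

variable [MeasureSpace α] [SigmaFinite (volume : Measure α)] [AddCommGroup α] [MeasurableAdd α]

theorem preimage_single_add_ae_eq_of_ae_lineSlice_trivial (i : Fin (n + 1))
    {s : Set (Fin (n + 1) → α)} (hs : MeasurableSet s)
    (h : ∀ᵐ y, lineSlice i s y = ∅ ∨ lineSlice i s y = univ) (t : α) :
    (Pi.single i t + ·) ⁻¹' s =ᵐ[volume] s := by
  refine ae_eq_of_ae_lineSlice_ae_eq i (measurable_const_add _ hs) hs (h.mono fun y hy ↦ ?_)
  rw [lineSlice_preimage_single_add]
  rcases hy with hy | hy <;> rw [hy] <;> rfl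

theorem eventuallyConst_of_ae_lineSlice_trivial [MeasurableAdd₂ α] [MeasurableNeg α]
    [(volume : Measure α).IsAddLeftInvariant] {s : Set (Fin (n + 1) → α)} (hs : MeasurableSet s)
    (h : ∀ i, ∀ᵐ y, lineSlice i s y = ∅ ∨ lineSlice i s y = univ) :
    EventuallyConst s (ae volume) := by
  refine AddAction.aeconst_of_aestabilizer_eq_top (Fin (n + 1) → α) hs.nullMeasurableSet
    (eq_top_iff.2 fun v _ ↦ ?_)
  have hsingle (i : Fin (n + 1)) (t : α) :
      Pi.single i t ∈ AddAction.aestabilizer (Fin (n + 1) → α) volume s := by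
    rw [AddAction.mem_aestabilizer, ← preimage_vadd_neg, ← Pi.single_neg]
    exact preimage_single_add_ae_eq_of_ae_lineSlice_trivial i hs (h i) (-t)
  rw [← Finset.univ_sum_single v]
  exact AddSubgroup.sum_mem _ fun i _ ↦ hsingle i (v i)

end Translation

theorem lines_meeting_set_and_complement_general
    (m : ℕ) (S : Set (Fin (m + 1) → ℝ)) (hS : MeasurableSet S)
    (h1 : 0 < volume S) (h2 : 0 < volume Sᶜ) :
    ∃ i₀ : Fin (m + 1), ∃ A : Set (Fin m → ℝ), 0 < volume A ∧
      ∀ x ∈ A, (∃ t : ℝ, i₀.insertNth t x ∈ S) ∧ (∃ t : ℝ, i₀.insertNth t x ∉ S) := by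
  suffices ∃ i, 0 < volume {y | (lineSlice i S y).Nonempty ∧ (lineSlice i S y)ᶜ.Nonempty} from
    this.imp fun i hi ↦ ⟨_, hi, fun _ hy ↦ hy⟩
  by_contra! h
  have htrivial (i : Fin (m + 1)) : ∀ᵐ y, lineSlice i S y = ∅ ∨ lineSlice i S y = univ := by
    filter_upwards [measure_eq_zero_iff_ae_notMem.1 (nonpos_iff_eq_zero.1 (h i))] with y hy
    simpa only [mem_ofPred_eq, not_and_or, not_nonempty_iff_eq_empty, compl_empty_iff] using hy
  rcases eventuallyConst_set.1 (eventuallyConst_of_ae_lineSlice_trivial hS htrivial) with hae | hae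
  · exact h2.ne' (ae_iff.1 hae)
  · exact h1.ne' (measure_eq_zero_iff_ae_notMem.2 hae)

/-- **Lemma (lines meeting a set and its complement).**
Let `d = m + 1 ≥ 2` and let `S ⊂ ℝ^d` be a Lebesgue measurable set with `|S| > 0` and
`|S^c| > 0`.  Then there are an index `i₀ ∈ {1,…,d}` and a set `A ⊂ ℝ^{d-1}` of positive
`(d-1)`-dimensional Lebesgue measure such that for every `x ∈ A` the line `L_{i₀}(x)` parallel
to the `i₀`-th coordinate axis through `x` meets both `S` and its complement. -/
theorem lines_meeting_set_and_complement
    (m : ℕ) (hm : 1 ≤ m) (S : Set (Fin (m + 1) → ℝ)) (hS : MeasurableSet S)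
    (h1 : 0 < volume S) (h2 : 0 < volume Sᶜ) :
    ∃ i₀ : Fin (m + 1), ∃ A : Set (Fin m → ℝ), 0 < volume A ∧
      ∀ x ∈ A, (∃ t : ℝ, i₀.insertNth t x ∈ S) ∧ (∃ t : ℝ, i₀.insertNth t x ∉ S) :=
  lines_meeting_set_and_complement_general m S hS h1 h2
end
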